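/- For every natural number n ≥ 3, the generalized Tribonacci numbers satisfy the cubic (Cassini-type) identity H_{n-1}³ + H_{n-2}²·H_{n+1} + H_{n-3}·H_n² - 2·H_{n-2}·H_{n-1}·H_n - H_{n-3}·H_{n-1}·H_{n+1} = 41. -/
import Mathlib

/-- The generalized Tribonacci sequence. -/
def genTrib : ℕ → ℤ
  | 0 => 3
  | 1 => 0
  | 2 => 2
  | n + 3 => genTrib (n + 2) + genTrib (n + 1) + genTrib n

lemma genTrib_aux (m : ℕ) :
    genTrib (m + 2) ^ 3 + genTrib (m + 1) ^ 2 * genTrib (m + 4) +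
      genTrib m * genTrib (m + 3) ^ 2 - 2 * genTrib (m + 1) * genTrib (m + 2) * genTrib (m + 3) -
      genTrib m * genTrib (m + 2) * genTrib (m + 4) = 41 := by
  induction m with
  | zero => decide
  | succ k ih =>
    have h3 : genTrib (k + 3) = genTrib (k + 2) + genTrib (k + 1) + genTrib k := rfl
    have h4 : genTrib (k + 4) = genTrib (k + 3) + genTrib (k + 2) + genTrib (k + 1) := rfl
    have h5 : genTrib (k + 5) = genTrib (k + 4) + genTrib (k + 3) + genTrib (k + 2) := rfl
    have e1 : k + 1 + 2 = k + 3 := by ring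
    have e2 : k + 1 + 4 = k + 5 := by ring
    have e3 : k + 1 + 3 = k + 4 := by ring
    rw [e1, e2, e3, h5, h4, h3]
    rw [h4, h3] at ih
    linear_combination ih

theorem genTrib_cassini (n : ℕ) (hn : 3 ≤ n) :
    genTrib (n - 1) ^ 3 + genTrib (n - 2) ^ 2 * genTrib (n + 1) +
      genTrib (n - 3) * genTrib n ^ 2 - 2 * genTrib (n - 2) * genTrib (n - 1) * genTrib n -
      genTrib (n - 3) * genTrib (n - 1) * genTrib (n + 1) = 41 := by
  obtain ⟨m, rfl⟩ : ∃ m, n = m + 3 := ⟨n - 3, by omega⟩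
  have : m + 3 - 1 = m + 2 := by omega
  rw [this]
  have : m + 3 - 2 = m + 1 := by omega
  rw [this]
  have : m + 3 - 3 = m := by omega
  rw [this]
  have := genTrib_aux m
  linear_combination this
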